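/- For every positive integer n, S_n(2) = (H_n^2 + H_n^{(2)})/2, where S_n(2) = ∑_{k=1}^n C(n,k)(-1)^{k-1}/k^2. -/

import Mathlib

/-!
Write `S_n(m) = ∑_{k=1}^n C(n,k) (-1)^(k-1) / k^m`. Pascal's rule `C(n+1,k) = C(n,k-1) + C(n,k)`
together with `C(n,k-1) / k = C(n+1,k) / (n+1)` gives `S_{n+1}(m+1) = S_n(m+1) + S_{n+1}(m) / (n+1)`,
and `S_{n+1}(0) = 1` is the alternating sum of binomial coefficients. Hence `S_n(1) = H_n`, and then
`S_n(2)` satisfies the same recurrence `S_{n+1}(2) - S_n(2) = H_{n+1} / (n+1)` as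
`(H_n^2 + H_n^{(2)}) / 2`.
-/

open Finset

lemma Finset.sum_Icc_one_eq_sum_range {M : Type*} [AddCommMonoid M] (f : ℕ → M) (n : ℕ) :
    ∑ k ∈ Icc 1 n, f k = ∑ k ∈ range n, f (k + 1) := by
  rw [range_eq_Ico, sum_Ico_add', ← Ico_add_one_right_eq_Icc, zero_add]

lemma Nat.cast_choose_mul_add_one (n k : ℕ) :
    (n.choose k : ℝ) * (n + 1) = (n + 1).choose (k + 1) * (k + 1) := by
  rw [mul_comm]
  exact_mod_cast Nat.add_one_mul_choose_eq n k

/-- `S_n(m)`, with the summation index shifted by one. -/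
noncomputable def altChooseSum (m n : ℕ) : ℝ :=
  ∑ k ∈ range n, (n.choose (k + 1) : ℝ) * (-1) ^ k / (k + 1) ^ m

lemma altChooseSum_zero_left (n : ℕ) : altChooseSum 0 (n + 1) = 1 := by
  have h : ∑ i ∈ range (n + 2), ((-1) ^ i * (n + 1).choose i : ℝ) = 0 := by
    exact_mod_cast Int.alternating_sum_range_choose_of_ne n.succ_ne_zero
  rw [sum_range_succ'] at h
  simp only [altChooseSum, pow_zero, div_one]
  simp only [pow_succ, neg_mul, sum_neg_distrib, mul_comm ((-1 : ℝ) ^ _),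
    Nat.choose_zero_right, Nat.cast_one, pow_zero, one_mul] at h
  linear_combination -h

lemma altChooseSum_succ (m n : ℕ) :
    altChooseSum (m + 1) (n + 1) = altChooseSum (m + 1) n + altChooseSum m (n + 1) / (n + 1) := by
  have split : ∀ k ∈ range (n + 1),
      ((n + 1).choose (k + 1) : ℝ) * (-1) ^ k / (k + 1) ^ (m + 1)
        = (n.choose (k + 1) : ℝ) * (-1) ^ k / (k + 1) ^ (m + 1)
          + ((n + 1).choose (k + 1) : ℝ) * (-1) ^ k / (k + 1) ^ m / (n + 1) := by
    intro k _
    have pascal : ((n + 1).choose (k + 1) : ℝ) = n.choose k + n.choose (k + 1) := by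
      exact_mod_cast Nat.choose_succ_succ' n k
    have absorb : (n.choose k : ℝ) / (k + 1) ^ (m + 1)
        = (n + 1).choose (k + 1) / (k + 1) ^ m / (n + 1) := by
      field_simp
      linear_combination (k + 1) ^ m * Nat.cast_choose_mul_add_one n k
    linear_combination (-1) ^ k / ((k : ℝ) + 1) ^ (m + 1) * pascal + (-1) ^ k * absorb
  rw [altChooseSum, sum_congr rfl split, sum_add_distrib, sum_range_succ, Nat.choose_succ_self,
    ← sum_div]
  simp [altChooseSum]

lemma altChooseSum_one (n : ℕ) : altChooseSum 1 n = ∑ k ∈ range n, 1 / ((k : ℝ) + 1) := by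
  induction n with
  | zero => simp [altChooseSum]
  | succ n ih => rw [altChooseSum_succ, altChooseSum_zero_left, ih, sum_range_succ]

lemma altChooseSum_two (n : ℕ) :
    altChooseSum 2 n = ((∑ k ∈ range n, 1 / ((k : ℝ) + 1)) ^ 2
      + ∑ k ∈ range n, 1 / ((k : ℝ) + 1) ^ 2) / 2 := by
  induction n with
  | zero => simp [altChooseSum]
  | succ n ih =>
    rw [altChooseSum_succ, altChooseSum_one, ih, sum_range_succ, sum_range_succ]
    field_simp
    ring

theorem stmt_11_general (n : ℕ) :
    ∑ k ∈ Finset.Icc 1 n, (Nat.choose n k : ℝ) * (-1) ^ (k - 1) / (k : ℝ) ^ 2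
      = ((∑ k ∈ Finset.Icc 1 n, (1 : ℝ) / k) ^ 2 + ∑ k ∈ Finset.Icc 1 n, (1 : ℝ) / (k : ℝ) ^ 2) / 2 := by
  simp only [sum_Icc_one_eq_sum_range, Nat.add_sub_cancel, Nat.cast_add, Nat.cast_one]
  exact altChooseSum_two n

theorem stmt_11 (n : ℕ) (hn : 1 ≤ n) :
    ∑ k ∈ Finset.Icc 1 n, (Nat.choose n k : ℝ) * (-1) ^ (k - 1) / (k : ℝ) ^ 2
      = ((∑ k ∈ Finset.Icc 1 n, (1 : ℝ) / k) ^ 2 + ∑ k ∈ Finset.Icc 1 n, (1 : ℝ) / (k : ℝ) ^ 2) / 2 :=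
  stmt_11_general n
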